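/- (Distribution formula for the weighted (h,q)-zeta function) Let q be a real number with 0 < q < 1, let α > 0 be real, let h be a positive integer, let x > 0 be real, and let a be an odd positive integer. Then for every complex s, ζ̃_q^{(α,h)}(s, ax) = ([2]_q / ([2]_{q^a} · [a]_{q^α}^{s})) · ∑_{i=0}^{a-1} (-1)^i q^{ih} ζ̃_{q^a}^{(α,h)}(s, x + i/a), where [a]_{q^α}^{s} = exp(s · log [a]_{q^α}). -/

import Mathlib

/-- The `q`-number `[x]_q = (1 - q^x)/(1 - q)` (real exponent, via `rpow`). -/
noncomputable def qnum (q x : ℝ) : ℝ := (1 - q ^ x) / (1 - q)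

/-- The `m`-th term of the weighted `(h,q)`-zeta series:
`(-1)^m q^{mh} [m+x]_{q^α}^{-s}` where `t^{-s} = exp(-s · log t)` with the real log. -/
noncomputable def zetaTerm (q α : ℝ) (h : ℕ) (x : ℝ) (s : ℂ) (m : ℕ) : ℂ :=
  (-1 : ℂ) ^ m * (q : ℂ) ^ (m * h) *
    Complex.exp (-s * (Real.log (qnum (q ^ α) ((m : ℝ) + x)) : ℂ))

/-- The weighted `(h,q)`-zeta function
`ζ̃_q^{(α,h)}(s,x) = [2]_q ∑_{m≥0} (-1)^m q^{mh} [m+x]_{q^α}^{-s}`. -/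
noncomputable def hqZeta (q α : ℝ) (h : ℕ) (x : ℝ) (s : ℂ) : ℂ :=
  (qnum q 2 : ℂ) * ∑' m : ℕ, zetaTerm q α h x s m

/-
Split the alternating series for `ζ̃_q(s, a x)` according to the residue `i` of the summation
index `m = n a + i` modulo `a`. Since `[a(n + x + i/a)]_Q = [a]_Q · [n + x + i/a]_{Q^a}`, each
residue class is, up to the factor `(-1)^i q^{ih} [a]_{q^α}^{-s}`, the series of
`ζ̃_{q^a}(s, x + i/a)`; the sign `(-1)^{na} = (-1)^n` is where `a` odd is needed.
-/

lemma qnum_pos {Q t : ℝ} (hQ0 : 0 < Q) (hQ1 : Q < 1) (ht : 0 < t) : 0 < qnum Q t :=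
  div_pos (sub_pos.2 (Real.rpow_lt_one hQ0.le hQ1 ht)) (sub_pos.2 hQ1)

lemma qnum_le_qnum {Q t u : ℝ} (hQ0 : 0 < Q) (hQ1 : Q < 1) (htu : t ≤ u) :
    qnum Q t ≤ qnum Q u := by
  have : Q ^ u ≤ Q ^ t := Real.rpow_le_rpow_of_exponent_ge hQ0 hQ1.le htu
  unfold qnum
  gcongr

lemma qnum_le_inv_one_sub {Q : ℝ} (hQ0 : 0 < Q) (hQ1 : Q < 1) (t : ℝ) :
    qnum Q t ≤ (1 - Q)⁻¹ := by
  have : 0 < Q ^ t := Real.rpow_pos_of_pos hQ0 t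
  rw [qnum, div_eq_mul_inv]
  exact mul_le_of_le_one_left (inv_nonneg.2 (sub_pos.2 hQ1).le) (by linarith)

lemma abs_log_qnum_le {Q x t : ℝ} (hQ0 : 0 < Q) (hQ1 : Q < 1) (hx : 0 < x) (hxt : x ≤ t) :
    |Real.log (qnum Q t)| ≤ max |Real.log (qnum Q x)| |Real.log (1 - Q)⁻¹| :=
  abs_le_max_abs_abs (Real.log_le_log (qnum_pos hQ0 hQ1 hx) (qnum_le_qnum hQ0 hQ1 hxt))
    (Real.log_le_log (qnum_pos hQ0 hQ1 (hx.trans_le hxt)) (qnum_le_inv_one_sub hQ0 hQ1 t))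

lemma qnum_mul {Q : ℝ} (hQ : 0 ≤ Q) (a y : ℝ) :
    qnum Q (a * y) = qnum Q a * qnum (Q ^ a) y := by
  unfold qnum
  rw [Real.rpow_mul hQ]
  rcases eq_or_ne (Q ^ a) 1 with hQa | hQa
  · simp [hQa]
  · rw [div_mul_div_comm, mul_comm (1 - Q), mul_div_mul_left _ _ (sub_ne_zero.2 hQa.symm)]

lemma log_qnum_natCast_mul {q α : ℝ} (hq0 : 0 < q) (hq1 : q < 1) (hα : 0 < α) {a : ℕ}
    (ha : 0 < a) {y : ℝ} (hy : 0 < y) :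
    Real.log (qnum (q ^ α) (a * y)) =
      Real.log (qnum (q ^ α) a) + Real.log (qnum ((q ^ a) ^ α) y) := by
  have hQ0 : 0 < q ^ α := Real.rpow_pos_of_pos hq0 α
  have hQ1 : q ^ α < 1 := Real.rpow_lt_one hq0.le hq1 hα
  have hbase : (q ^ a) ^ α = (q ^ α) ^ (a : ℝ) := by
    rw [← Real.rpow_natCast, ← Real.rpow_mul hq0.le, ← Real.rpow_mul hq0.le, mul_comm]
  rw [qnum_mul hQ0.le, hbase]
  exact Real.log_mul (qnum_pos hQ0 hQ1 (Nat.cast_pos.2 ha)).ne'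
    (qnum_pos (Real.rpow_pos_of_pos hQ0 _) (Real.rpow_lt_one hQ0.le hQ1 (Nat.cast_pos.2 ha)) hy).ne'

lemma norm_zetaTerm_le {q α x : ℝ} (hq0 : 0 < q) (hq1 : q < 1) (hα : 0 < α) (h : ℕ)
    (hx : 0 < x) (s : ℂ) (m : ℕ) :
    ‖zetaTerm q α h x s m‖ ≤
      Real.exp (‖s‖ * max |Real.log (qnum (q ^ α) x)| |Real.log (1 - q ^ α)⁻¹|) *
        (q ^ h) ^ m := by
  have hQ0 : 0 < q ^ α := Real.rpow_pos_of_pos hq0 α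
  have hQ1 : q ^ α < 1 := Real.rpow_lt_one hq0.le hq1 hα
  set L := Real.log (qnum (q ^ α) (m + x))
  have hL := abs_log_qnum_le hQ0 hQ1 hx (le_add_of_nonneg_left (Nat.cast_nonneg m))
  have hexp : (-s * L).re ≤ ‖s‖ * |L| :=
    calc (-s * L).re = -s.re * L := Complex.re_mul_ofReal _ _
      _ ≤ |s.re| * |L| := by rw [← abs_mul, neg_mul]; exact neg_le_abs _
      _ ≤ ‖s‖ * |L| := by gcongr; exact Complex.abs_re_le_norm s
  rw [zetaTerm, norm_mul, norm_mul, norm_pow, norm_neg, norm_one, one_pow, one_mul, norm_pow,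
    Complex.norm_real, Real.norm_of_nonneg hq0.le, Complex.norm_exp, mul_comm, ← pow_mul,
    mul_comm h]
  gcongr
  exact hexp.trans (by gcongr)

lemma summable_zetaTerm {q α x : ℝ} (hq0 : 0 < q) (hq1 : q < 1) (hα : 0 < α) {h : ℕ}
    (hh : 0 < h) (hx : 0 < x) (s : ℂ) : Summable (zetaTerm q α h x s) :=
  .of_norm_bounded ((summable_geometric_of_lt_one (pow_nonneg hq0.le h)
    (pow_lt_one₀ hq0.le hq1 hh.ne')).mul_left _) (norm_zetaTerm_le hq0 hq1 hα h hx s)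

theorem Summable.tsum_eq_sum_range_tsum_mul_add {E : Type*} [AddCommGroup E] [UniformSpace E]
    [IsUniformAddGroup E] [CompleteSpace E] [T2Space E] {f : ℕ → E} (hf : Summable f)
    (a : ℕ) [NeZero a] :
    ∑' m, f m = ∑ i ∈ Finset.range a, ∑' n, f (n * a + i) := by
  let e : Fin a × ℕ ≃ ℕ := (Equiv.prodComm _ _).trans (Nat.divModEquiv a).symm
  have he : Summable fun p => f (e p) := e.summable_iff.2 hf
  rw [← e.tsum_eq, he.tsum_prod' he.prod_factor, tsum_fintype]
  exact Fin.sum_univ_eq_sum_range (fun i => ∑' n, f (n * a + i)) a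

lemma zetaTerm_mul_add {q α x : ℝ} (hq0 : 0 < q) (hq1 : q < 1) (hα : 0 < α) (h : ℕ)
    (hx : 0 < x) {a : ℕ} (ha : 0 < a) (hao : Odd a) (s : ℂ) (n i : ℕ) :
    zetaTerm q α h (a * x) s (n * a + i) =
      (-1 : ℂ) ^ i * (q : ℂ) ^ (i * h) * Complex.exp (-s * (Real.log (qnum (q ^ α) a) : ℂ)) *
        zetaTerm (q ^ a) α h (x + i / a) s n := by
  have harg : ((n * a + i : ℕ) : ℝ) + a * x = a * (n + (x + i / a)) := by
    push_cast
    field_simp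
    ring
  have hsign : (-1 : ℂ) ^ (n * a + i) = (-1) ^ n * (-1) ^ i := by
    rw [pow_add, mul_comm n a, pow_mul, hao.neg_one_pow]
  have hpow : (q : ℂ) ^ ((n * a + i) * h) = ((q : ℂ) ^ a) ^ (n * h) * (q : ℂ) ^ (i * h) := by
    rw [← pow_mul, ← pow_add]
    ring_nf
  simp only [zetaTerm]
  rw [harg, log_qnum_natCast_mul hq0 hq1 hα ha (by positivity), hsign, hpow, Complex.ofReal_pow,
    Complex.ofReal_add, mul_add, Complex.exp_add]
  ring

theorem stmt4 (q α x : ℝ) (hq0 : 0 < q) (hq1 : q < 1) (hα : 0 < α) (h : ℕ) (hh : 0 < h)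
    (hx : 0 < x) (a : ℕ) (ha : 0 < a) (hao : Odd a) (s : ℂ) :
    hqZeta q α h ((a : ℝ) * x) s =
      ((qnum q 2 : ℂ) /
          ((qnum (q ^ a) 2 : ℂ) * Complex.exp (s * (Real.log (qnum (q ^ α) (a : ℝ)) : ℂ)))) *
        ∑ i ∈ Finset.range a, (-1 : ℂ) ^ i * (q : ℂ) ^ (i * h) *
          hqZeta (q ^ a) α h (x + (i : ℝ) / (a : ℝ)) s := by
  have : NeZero a := ⟨ha.ne'⟩
  have hsplit := (summable_zetaTerm (x := a * x) hq0 hq1 hα hh (by positivity) s)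
    |>.tsum_eq_sum_range_tsum_mul_add a
  simp only [zetaTerm_mul_add hq0 hq1 hα h hx ha hao, tsum_mul_left] at hsplit
  have hqa2 : (qnum (q ^ a) 2 : ℂ) ≠ 0 := Complex.ofReal_ne_zero.2
    (qnum_pos (pow_pos hq0 a) (pow_lt_one₀ hq0.le hq1 ha.ne') two_pos).ne'
  rw [hqZeta, hsplit, Finset.mul_sum, Finset.mul_sum]
  refine Finset.sum_congr rfl fun i _ => ?_
  rw [hqZeta, neg_mul, Complex.exp_neg]
  field_simp
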